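/- Third difference operator formula (Proposition 4.2): for every Schwartz function κ : ℝ⁴ → ℂ, every Schwartz function h : ℝ → ℂ, every λ ∈ ℝ \ {0}, μ ∈ ℝ, and u ∈ ℝ, one has (π_{λ,μ}(x₃κ)h)(u) = (i/λ)[(π_{λ,μ}(x₂κ)(v ↦ −iλv·h(v)))(u) + (π_{λ,μ}(κ)h')(u) − d/du (π_{λ,μ}(κ)h)(u)], i.e. Δ_{x₃}π_{λ,μ}(κ) = (i/λ)(Δ_{x₂}π_{λ,μ}(κ)π_{λ,μ}(X₃) + π_{λ,μ}(κ)π_{λ,μ}(X₁) − π_{λ,μ}(X₁)π_{λ,μ}(κ)), where π_{λ,μ}(X₁) = ∂_u and π_{λ,μ}(X₃) is multiplication by −iλu. -/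

import Mathlib

/-!
Differentiate `u ↦ (π_{λ,μ}(κ)h)(u)` under the integral sign. The `u`-derivative of the phase is
`λx₃ − λx₂(u − x₁) = λx₃ + x₂ · (−λ(u − x₁))`, so the product rule gives
`∂_u π(κ)h = iλ π(x₃κ)h + π(x₂κ)(v ↦ −iλv h(v)) + π(κ)h'`, which is the formula solved for
`π(x₃κ)h`. The exchange of derivative and integral is justified by domination: `|exp(i·)| = 1`,
the functions `h`, `v h(v)` and `h'` are bounded, and `κ`, `x₂κ`, `x₃κ` are integrable.
-/

open MeasureTheory Complex

noncomputable section

/-- The group Fourier transform on the Engel group: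
`(π_{λ,μ}(κ)h)(u) = ∫_{ℝ⁴} κ(x) exp(i((μ/(2λ))x₂ − λx₄ + λx₃(u−x₁) − (λ/2)x₂(u−x₁)²)) h(u−x₁) dx`. -/
def piF (lam mu : ℝ) (κ : ℝ × ℝ × ℝ × ℝ → ℂ) (h : ℝ → ℂ) (u : ℝ) : ℂ :=
  ∫ x : ℝ × ℝ × ℝ × ℝ,
    κ x * Complex.exp (Complex.I *
      (((mu / (2 * lam)) * x.2.1 - lam * x.2.2.2 + lam * x.2.2.1 * (u - x.1)
        - (lam / 2) * x.2.1 * (u - x.1) ^ 2 : ℝ) : ℂ)) * h (u - x.1)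

-- Instance search does not find these for iterated product measures.
instance : (volume : Measure (ℝ × ℝ × ℝ)).IsAddHaarMeasure :=
  Measure.prod.instIsAddHaarMeasure volume volume

instance : (volume : Measure (ℝ × ℝ × ℝ × ℝ)).IsAddHaarMeasure :=
  Measure.prod.instIsAddHaarMeasure volume volume

theorem SchwartzMap.integrable_ofReal_mul {E : Type*} [NormedAddCommGroup E] [NormedSpace ℝ E]
    [MeasurableSpace E] [BorelSpace E] [SecondCountableTopology E] {μ : Measure E}
    [μ.HasTemperateGrowth] (κ : SchwartzMap E ℂ) {g : E → ℝ} (hg : Continuous g)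
    (hg_le : ∀ x, |g x| ≤ ‖x‖) : Integrable (fun x => (g x : ℂ) * κ x) μ := by
  refine (κ.integrable_pow_mul μ 1).mono'
    ((continuous_ofReal.comp hg).mul κ.continuous).aestronglyMeasurable
    (Filter.Eventually.of_forall fun x => ?_)
  rw [norm_mul, norm_real, Real.norm_eq_abs, pow_one]
  exact mul_le_mul_of_nonneg_right (hg_le x) (norm_nonneg _)

namespace Engel

variable (lam mu : ℝ)

def phase (u : ℝ) (x : ℝ × ℝ × ℝ × ℝ) : ℝ :=
  (mu / (2 * lam)) * x.2.1 - lam * x.2.2.2 + lam * x.2.2.1 * (u - x.1)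
    - (lam / 2) * x.2.1 * (u - x.1) ^ 2

-- `piF lam mu κ h u = ∫ x, integrand lam mu κ h u x` holds definitionally.
def integrand (κ : ℝ × ℝ × ℝ × ℝ → ℂ) (h : ℝ → ℂ) (u : ℝ) (x : ℝ × ℝ × ℝ × ℝ) : ℂ :=
  κ x * exp (I * phase lam mu u x) * h (u - x.1)

def integrandDeriv (κ : ℝ × ℝ × ℝ × ℝ → ℂ) (h : ℝ → ℂ) (u : ℝ) (x : ℝ × ℝ × ℝ × ℝ) : ℂ :=
  I * lam * integrand lam mu (fun x => (x.2.2.1 : ℂ) * κ x) h u x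
    + integrand lam mu (fun x => (x.2.1 : ℂ) * κ x) (fun v => -I * lam * v * h v) u x
    + integrand lam mu κ (deriv h) u x

theorem hasDerivAt_phase (u : ℝ) (x : ℝ × ℝ × ℝ × ℝ) :
    HasDerivAt (phase lam mu · x) (lam * x.2.2.1 - lam * x.2.1 * (u - x.1)) u := by
  have hshift : HasDerivAt (· - x.1) 1 u := (hasDerivAt_id u).sub_const x.1
  refine ((((hshift.const_mul (lam * x.2.2.1)).const_add
    ((mu / (2 * lam)) * x.2.1 - lam * x.2.2.2)).sub
    ((hshift.pow 2).const_mul ((lam / 2) * x.2.1)))).congr_deriv ?_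
  norm_num
  ring

variable {lam mu}

theorem norm_integrand (κ : ℝ × ℝ × ℝ × ℝ → ℂ) (h : ℝ → ℂ) (u : ℝ) (x : ℝ × ℝ × ℝ × ℝ) :
    ‖integrand lam mu κ h u x‖ = ‖κ x‖ * ‖h (u - x.1)‖ := by
  rw [integrand, norm_mul, norm_mul, norm_exp_I_mul_ofReal, mul_one]

theorem integrable_integrand {κ : ℝ × ℝ × ℝ × ℝ → ℂ} {h : ℝ → ℂ} {C : ℝ} (hκ : Integrable κ)
    (hh : Continuous h) (hC : ∀ v, ‖h v‖ ≤ C) (u : ℝ) :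
    Integrable (integrand lam mu κ h u) := by
  have hcont : Continuous fun x => exp (I * phase lam mu u x) * h (u - x.1) := by
    unfold phase; fun_prop
  refine (hκ.mul_bdd (c := C) hcont.aestronglyMeasurable
    (Filter.Eventually.of_forall fun x => ?_)).congr
    (Filter.Eventually.of_forall fun x => (mul_assoc _ _ _).symm)
  rw [norm_mul, norm_exp_I_mul_ofReal, one_mul]
  exact hC _

theorem hasDerivAt_integrand (κ : ℝ × ℝ × ℝ × ℝ → ℂ) {h : ℝ → ℂ} (hh : Differentiable ℝ h)
    (u : ℝ) (x : ℝ × ℝ × ℝ × ℝ) :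
    HasDerivAt (integrand lam mu κ h · x) (integrandDeriv lam mu κ h u x) u := by
  have hexp := ((hasDerivAt_phase lam mu u x).ofReal_comp.const_mul I).cexp
  have hh' := (hh (u - x.1)).hasDerivAt.comp_sub_const u x.1
  refine ((hexp.const_mul (κ x)).mul hh').congr_deriv ?_
  simp only [integrandDeriv, integrand]
  push_cast
  ring

theorem norm_integrandDeriv_le (κ : ℝ × ℝ × ℝ × ℝ → ℂ) {h : ℝ → ℂ} {C₀ C₁ C₂ : ℝ}
    (hC₀ : ∀ v, ‖h v‖ ≤ C₀) (hC₁ : ∀ v : ℝ, ‖-I * lam * v * h v‖ ≤ C₁)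
    (hC₂ : ∀ v, ‖deriv h v‖ ≤ C₂) (u : ℝ) (x : ℝ × ℝ × ℝ × ℝ) :
    ‖integrandDeriv lam mu κ h u x‖
      ≤ |lam| * (‖(x.2.2.1 : ℂ) * κ x‖ * C₀) + ‖(x.2.1 : ℂ) * κ x‖ * C₁ + ‖κ x‖ * C₂ := by
  refine norm_add₃_le.trans (add_le_add_three ?_ ?_ ?_)
  · rw [norm_mul, norm_mul, norm_I, one_mul, norm_real, Real.norm_eq_abs, norm_integrand]
    exact mul_le_mul_of_nonneg_left
      (mul_le_mul_of_nonneg_left (hC₀ _) (norm_nonneg _)) (abs_nonneg lam)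
  · rw [norm_integrand]
    exact mul_le_mul_of_nonneg_left (hC₁ _) (norm_nonneg _)
  · rw [norm_integrand]
    exact mul_le_mul_of_nonneg_left (hC₂ _) (norm_nonneg _)

theorem integral_integrandDeriv {κ : ℝ × ℝ × ℝ × ℝ → ℂ} {h : ℝ → ℂ} {u : ℝ}
    (hint₁ : Integrable (integrand lam mu (fun x => (x.2.2.1 : ℂ) * κ x) h u))
    (hint₂ : Integrable
      (integrand lam mu (fun x => (x.2.1 : ℂ) * κ x) (fun v => -I * lam * v * h v) u))
    (hint₃ : Integrable (integrand lam mu κ (deriv h) u)) :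
    ∫ x, integrandDeriv lam mu κ h u x
      = I * lam * piF lam mu (fun x => (x.2.2.1 : ℂ) * κ x) h u
        + piF lam mu (fun x => (x.2.1 : ℂ) * κ x) (fun v => -I * lam * v * h v) u
        + piF lam mu κ (deriv h) u := by
  simp only [integrandDeriv]
  rw [integral_add ((hint₁.const_mul _).fun_add hint₂) hint₃,
    integral_add (hint₁.const_mul _) hint₂, integral_const_mul]
  rfl

theorem hasDerivAt_piF {κ : ℝ × ℝ × ℝ × ℝ → ℂ} (hκ : Integrable κ)
    (hκ₂ : Integrable fun x => (x.2.1 : ℂ) * κ x) (hκ₃ : Integrable fun x => (x.2.2.1 : ℂ) * κ x)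
    (h : SchwartzMap ℝ ℂ) (u : ℝ) :
    HasDerivAt (piF lam mu κ h)
      (I * lam * piF lam mu (fun x => (x.2.2.1 : ℂ) * κ x) h u
        + piF lam mu (fun x => (x.2.1 : ℂ) * κ x) (fun v => -I * lam * v * h v) u
        + piF lam mu κ (deriv h) u) u := by
  have hC₀ : ∀ v, ‖h v‖ ≤ SchwartzMap.seminorm ℂ 0 0 h := h.norm_le_seminorm ℂ
  have hC₁ : ∀ v : ℝ, ‖-I * lam * v * h v‖ ≤ |lam| * SchwartzMap.seminorm ℂ 1 0 h := fun v => by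
    have := h.norm_pow_mul_le_seminorm ℂ 1 v
    rw [pow_one, Real.norm_eq_abs] at this
    rw [norm_mul, norm_mul, norm_mul, norm_neg, norm_I, one_mul, norm_real, norm_real,
      Real.norm_eq_abs, Real.norm_eq_abs, mul_assoc]
    exact mul_le_mul_of_nonneg_left this (abs_nonneg lam)
  have hC₂ : ∀ v, ‖deriv h v‖ ≤ SchwartzMap.seminorm ℂ 0 0 (SchwartzMap.derivCLM ℂ ℂ h) :=
    fun v => by
      simpa only [SchwartzMap.derivCLM_apply] using
        (SchwartzMap.derivCLM ℂ ℂ h).norm_le_seminorm ℂ v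
  have hderiv_cont : Continuous (deriv h) := by
    simpa only [← funext (SchwartzMap.derivCLM_apply ℂ h)] using
      (SchwartzMap.derivCLM ℂ ℂ h).continuous
  have hint := integrable_integrand (lam := lam) (mu := mu) hκ h.continuous hC₀
  have hint₁ := integrable_integrand (lam := lam) (mu := mu) hκ₃ h.continuous hC₀ u
  have hint₂ := integrable_integrand (lam := lam) (mu := mu) hκ₂ (by fun_prop) hC₁ u
  have hint₃ := integrable_integrand (lam := lam) (mu := mu) hκ hderiv_cont hC₂ u
  have hderiv := (hasDerivAt_integral_of_dominated_loc_of_deriv_le Filter.univ_mem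
    (Filter.Eventually.of_forall fun w => (hint w).1) (hint u)
    (((hint₁.const_mul _).fun_add hint₂).fun_add hint₃).1
    (Filter.Eventually.of_forall fun x w _ => norm_integrandDeriv_le κ hC₀ hC₁ hC₂ w x)
    (((hκ₃.norm.mul_const _).const_mul |lam|).fun_add (hκ₂.norm.mul_const _) |>.fun_add
      (hκ.norm.mul_const _))
    (Filter.Eventually.of_forall fun x w _ => hasDerivAt_integrand κ h.differentiable w x)).2
  rwa [integral_integrandDeriv hint₁ hint₂ hint₃] at hderiv

end Engel

/-- Third difference operator formula (Proposition 4.2):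
`Δ_{x₃}π_{λ,μ}(κ) = (i/λ)(Δ_{x₂}π_{λ,μ}(κ)π_{λ,μ}(X₃) + π_{λ,μ}(κ)π_{λ,μ}(X₁) −
π_{λ,μ}(X₁)π_{λ,μ}(κ))`, where `π_{λ,μ}(X₁) = ∂_u`, `π_{λ,μ}(X₃)` is multiplication by
`−iλu`, and `Δ_{x_i}π_{λ,μ}(κ) = π_{λ,μ}(x_iκ)`. -/
theorem engel_difference_operator_x3 :
    ∀ κ : SchwartzMap (ℝ × ℝ × ℝ × ℝ) ℂ, ∀ h : SchwartzMap ℝ ℂ,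
      ∀ lam : ℝ, lam ≠ 0 → ∀ mu u : ℝ,
        piF lam mu (fun x => (x.2.2.1 : ℂ) * κ x) h u =
          (Complex.I / (lam : ℂ)) *
            (piF lam mu (fun x => (x.2.1 : ℂ) * κ x)
                (fun v => -Complex.I * (lam : ℂ) * (v : ℂ) * h v) u +
              piF lam mu κ (deriv (h : ℝ → ℂ)) u -
              deriv (fun w : ℝ => piF lam mu κ h w) u) := by
  intro κ h lam hlam mu u
  have hκ₂ : Integrable fun x : ℝ × ℝ × ℝ × ℝ => (x.2.1 : ℂ) * κ x :=
    κ.integrable_ofReal_mul (by fun_prop) fun x => (norm_fst_le x.2).trans (norm_snd_le x)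
  have hκ₃ : Integrable fun x : ℝ × ℝ × ℝ × ℝ => (x.2.2.1 : ℂ) * κ x :=
    κ.integrable_ofReal_mul (by fun_prop) fun x =>
      ((norm_fst_le x.2.2).trans (norm_snd_le x.2)).trans (norm_snd_le x)
  rw [(Engel.hasDerivAt_piF κ.integrable hκ₂ hκ₃ h u).deriv]
  have hlamC : (lam : ℂ) ≠ 0 := ofReal_ne_zero.mpr hlam
  field_simp
  linear_combination (lam * piF lam mu (fun x => (x.2.2.1 : ℂ) * κ x) h u) * I_sq
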